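/- Define f : [0,1] → 2^[0,1] by f(x) = {2x/3, 2x/3 + 1/3}. Then f is upper semicontinuous, surjective, and has the Weak Intermediate Value Property, but its graph G(f) is not connected. -/

import Mathlib

/-! The two values of `fTwoLines` come from the continuous branches `x ↦ 2x/3` and
`x ↦ 2x/3 + 1/3`. Continuity of the branches gives upper semicontinuity, and following the
branch through `y₁` gives the Weak Intermediate Value Property by the ordinary intermediate
value theorem. Their ranges `[0, 2/3]` and `[1/3, 1]` cover `[0, 1]`. On the graph the
continuous function `y - 2x/3` takes exactly the two values `0` and `1/3`, so the graph is
disconnected. -/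

open Set

/-- Graph of a set-valued function on [0,1]. -/
def setValGraph (f : ℝ → Set ℝ) : Set (ℝ × ℝ) :=
  {p | p.1 ∈ Icc (0:ℝ) 1 ∧ p.2 ∈ f p.1}

/-- f has nonempty compact values contained in [0,1]. -/
def SV (f : ℝ → Set ℝ) : Prop :=
  ∀ x ∈ Icc (0:ℝ) 1, (f x).Nonempty ∧ IsCompact (f x) ∧ f x ⊆ Icc (0:ℝ) 1

/-- Upper semicontinuity on [0,1]. -/
def USC (f : ℝ → Set ℝ) : Prop :=
  ∀ x ∈ Icc (0:ℝ) 1, ∀ U : Set ℝ, IsOpen U → f x ⊆ U →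
    ∃ V : Set ℝ, IsOpen V ∧ x ∈ V ∧ ∀ v ∈ V ∩ Icc (0:ℝ) 1, f v ⊆ U

/-- Weak Intermediate Value Property. -/
def WIVP (f : ℝ → Set ℝ) : Prop :=
  ∀ x₁ ∈ Icc (0:ℝ) 1, ∀ x₂ ∈ Icc (0:ℝ) 1, x₁ ≠ x₂ → ∀ y₁ ∈ f x₁,
    ∃ y₂ ∈ f x₂, ∀ y ∈ uIcc y₁ y₂, ∃ x ∈ uIcc x₁ x₂, y ∈ f x

/-- Intermediate Value Property. -/
def IVP (f : ℝ → Set ℝ) : Prop :=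
  ∀ x₁ ∈ Icc (0:ℝ) 1, ∀ x₂ ∈ Icc (0:ℝ) 1, x₁ ≠ x₂ → ∀ y₁ ∈ f x₁, ∀ y₂ ∈ f x₂, y₁ ≠ y₂ →
    ∀ y ∈ Ioo (min y₁ y₂) (max y₁ y₂), ∃ x ∈ Ioo (min x₁ x₂) (max x₁ x₂), y ∈ f x

noncomputable def fTwoLines (x : ℝ) : Set ℝ := {2*x/3, 2*x/3 + 1/3}

theorem mem_fTwoLines {x y : ℝ} : y ∈ fTwoLines x ↔ y = 2 * x / 3 ∨ y = 2 * x / 3 + 1 / 3 :=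
  Iff.rfl

theorem usc_pair {g h : ℝ → ℝ} (hg : Continuous g) (hh : Continuous h) :
    USC fun x => {g x, h x} := by
  intro x _ U hU hxU
  refine ⟨g ⁻¹' U ∩ h ⁻¹' U, (hU.preimage hg).inter (hU.preimage hh),
    ⟨hxU (mem_insert _ _), hxU (mem_insert_of_mem _ rfl)⟩, ?_⟩
  rintro v ⟨⟨hgv, hhv⟩, -⟩
  exact insert_subset hgv (singleton_subset_iff.mpr hhv)

theorem wivp_of_forall_mem_continuous_selection {F : ℝ → Set ℝ}
    (hF : ∀ x, ∀ y ∈ F x, ∃ k : ℝ → ℝ, Continuous k ∧ k x = y ∧ ∀ z, k z ∈ F z) :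
    WIVP F := by
  intro x₁ _ x₂ _ _ y₁ hy₁
  obtain ⟨k, hk, rfl, hkF⟩ := hF x₁ y₁ hy₁
  refine ⟨k x₂, hkF x₂, fun y hy => ?_⟩
  obtain ⟨x, hx, rfl⟩ := intermediate_value_uIcc hk.continuousOn hy
  exact ⟨x, hx, hkF x⟩

theorem wivp_pair {g h : ℝ → ℝ} (hg : Continuous g) (hh : Continuous h) :
    WIVP fun x => {g x, h x} := by
  refine wivp_of_forall_mem_continuous_selection fun x y hy => ?_
  rcases hy with rfl | rfl
  · exact ⟨g, hg, rfl, fun z => mem_insert _ _⟩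
  · exact ⟨h, hh, rfl, fun z => mem_insert_of_mem _ rfl⟩

theorem exists_mem_fTwoLines {y : ℝ} (hy : y ∈ Icc (0 : ℝ) 1) :
    ∃ x ∈ Icc (0 : ℝ) 1, y ∈ fTwoLines x := by
  rcases le_total y (2 / 3) with h | h
  · exact ⟨3 * y / 2, ⟨by linarith [hy.1], by linarith⟩, mem_fTwoLines.2 (.inl (by ring))⟩
  · exact ⟨3 * y / 2 - 1 / 2, ⟨by linarith, by linarith [hy.2]⟩,
      mem_fTwoLines.2 (.inr (by ring))⟩

theorem not_isConnected_setValGraph_fTwoLines : ¬ IsConnected (setValGraph fTwoLines) := by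
  intro hconn
  set φ : ℝ × ℝ → ℝ := fun p => p.2 - 2 * p.1 / 3
  have hφ : MapsTo φ (setValGraph fTwoLines) {0, 1 / 3} := by
    rintro p ⟨-, hp⟩
    rcases mem_fTwoLines.1 hp with h | h <;> simp [φ, h]
  have hI : (0 : ℝ) ∈ Icc (0 : ℝ) 1 := ⟨le_rfl, zero_le_one⟩
  have h₀ : (0 : ℝ) ∈ φ '' setValGraph fTwoLines :=
    ⟨(0, 0), ⟨hI, mem_fTwoLines.2 (.inl (by ring))⟩, by simp [φ]⟩
  have h₁ : (1 / 3 : ℝ) ∈ φ '' setValGraph fTwoLines :=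
    ⟨(0, 1 / 3), ⟨hI, mem_fTwoLines.2 (.inr (by ring))⟩, by simp [φ]⟩
  have hord : OrdConnected (φ '' setValGraph fTwoLines) :=
    (hconn.image φ (by fun_prop : Continuous φ).continuousOn).isPreconnected.ordConnected
  have h_mid : (1 / 6 : ℝ) ∈ Icc 0 (1 / 3) := ⟨by norm_num, by norm_num⟩
  obtain ⟨p, hp, hp_eq⟩ := hord.out h₀ h₁ h_mid
  rcases hφ hp with h | h <;> norm_num [hp_eq] at h

theorem stmt10 :
    USC fTwoLines ∧
    (∀ y ∈ Icc (0:ℝ) 1, ∃ x ∈ Icc (0:ℝ) 1, y ∈ fTwoLines x) ∧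
    WIVP fTwoLines ∧
    ¬ IsConnected (setValGraph fTwoLines) :=
  ⟨usc_pair (g := fun x => 2 * x / 3) (by fun_prop) (by fun_prop),
    fun _ => exists_mem_fTwoLines,
    wivp_pair (g := fun x => 2 * x / 3) (by fun_prop) (by fun_prop),
    not_isConnected_setValGraph_fTwoLines⟩
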